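/- Let X = U_X D_X V_X^T be the thin SVD of an N-by-P real matrix X with P < N, and let C = V_X D_X V_X^T. If L ∈ ℝ^{P×K} and Z̃ = Polar.U(C L), then Z := U_X V_X^T Z̃ satisfies Z^T Z = I_K and ||X - Z L^T||_F^2 = ||C - Z̃ L^T||_F^2. -/

import Mathlib

open Matrix

noncomputable def frobSq {n p : ℕ} (A : Matrix (Fin n) (Fin p) ℝ) : ℝ := ∑ i, ∑ j, (A i j)^2

/-! Since `C = V_X D_X V_Xᵀ`, we have `X = U_X D_X V_Xᵀ = (U_X V_Xᵀ) C`, and `W = U_X V_Xᵀ` has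
orthonormal columns. Hence `X - Z Lᵀ = W (C - Z̃ Lᵀ)`, and left multiplication by a matrix with
orthonormal columns preserves both orthonormality of columns and the Frobenius norm. -/

section OrthonormalColumns

variable {R : Type*} [CommRing R] {l m n : Type*} [Fintype l] [Fintype m] [DecidableEq n]

theorem Matrix.transpose_mul_self_mul_eq_one [DecidableEq m] {A : Matrix l m R}
    {B : Matrix m n R} (hA : Aᵀ * A = 1) (hB : Bᵀ * B = 1) : (A * B)ᵀ * (A * B) = 1 := by
  rw [transpose_mul, Matrix.mul_assoc, ← Matrix.mul_assoc Aᵀ, hA, Matrix.one_mul, hB]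

theorem Matrix.mul_transpose_transpose_mul_self_eq_one [DecidableEq l]
    {U : Matrix m l R} {V : Matrix n l R} (hU : Uᵀ * U = 1) (hV : V * Vᵀ = 1) :
    (U * Vᵀ)ᵀ * (U * Vᵀ) = 1 :=
  transpose_mul_self_mul_eq_one hU (by rwa [transpose_transpose])

end OrthonormalColumns

theorem frobSq_eq_trace {n p : ℕ} (A : Matrix (Fin n) (Fin p) ℝ) :
    frobSq A = trace (Aᵀ * A) := by
  simp only [frobSq, trace, diag_apply, mul_apply, transpose_apply, sq]
  exact Finset.sum_comm

theorem frobSq_mul_of_transpose_mul_self_eq_one {n m p : ℕ} {W : Matrix (Fin n) (Fin m) ℝ}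
    (hW : Wᵀ * W = 1) (A : Matrix (Fin m) (Fin p) ℝ) : frobSq (W * A) = frobSq A := by
  rw [frobSq_eq_trace, frobSq_eq_trace, transpose_mul, Matrix.mul_assoc,
    ← Matrix.mul_assoc Wᵀ, hW, Matrix.one_mul]

theorem Matrix.mul_mul_transpose_eq_of_transpose_mul_self_eq_one {R : Type*} [CommRing R]
    {l m : Type*} [Fintype m] [DecidableEq m] {U : Matrix l m R} {V : Matrix m m R}
    (hV : Vᵀ * V = 1) (D : Matrix m m R) : U * D * Vᵀ = U * Vᵀ * (V * D * Vᵀ) := by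
  simp only [Matrix.mul_assoc]
  rw [← Matrix.mul_assoc Vᵀ, hV, Matrix.one_mul]

theorem stmt12_general {N P K : ℕ}
    (X : Matrix (Fin N) (Fin P) ℝ)
    (UX : Matrix (Fin N) (Fin P) ℝ) (VX : Matrix (Fin P) (Fin P) ℝ) (dX : Fin P → ℝ)
    (hUX : UX.transpose * UX = 1)
    (hVX : VX.transpose * VX = 1) (hVX' : VX * VX.transpose = 1)
    (hX : X = UX * Matrix.diagonal dX * VX.transpose)
    (C : Matrix (Fin P) (Fin P) ℝ) (hC : C = VX * Matrix.diagonal dX * VX.transpose)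
    (L : Matrix (Fin P) (Fin K) ℝ)
    (U' : Matrix (Fin P) (Fin K) ℝ) (V' : Matrix (Fin K) (Fin K) ℝ)
    (hU' : U'.transpose * U' = 1)
    (hV'2 : V' * V'.transpose = 1) :
    ((UX * VX.transpose * (U' * V'.transpose)).transpose
        * (UX * VX.transpose * (U' * V'.transpose)) = 1) ∧
    frobSq (X - (UX * VX.transpose * (U' * V'.transpose)) * L.transpose)
      = frobSq (C - (U' * V'.transpose) * L.transpose) := by
  have hW : (UX * VXᵀ)ᵀ * (UX * VXᵀ) = 1 := mul_transpose_transpose_mul_self_eq_one hUX hVX'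
  have hX_eq : X = UX * VXᵀ * C := by
    rw [hX, hC, mul_mul_transpose_eq_of_transpose_mul_self_eq_one hVX]
  refine ⟨transpose_mul_self_mul_eq_one hW (mul_transpose_transpose_mul_self_eq_one hU' hV'2), ?_⟩
  rw [hX_eq, Matrix.mul_assoc _ (U' * V'ᵀ), ← Matrix.mul_sub,
    frobSq_mul_of_transpose_mul_self_eq_one hW]

/-- With `X = U_X D_X V_Xᵀ` a thin SVD, `C = V_X D_X V_Xᵀ`, and `Z̃ = U' V'ᵀ` the polar
U factor of `C L` (given via an SVD `C L = U' diagonal d' V'ᵀ`), the matrix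
`Z = U_X V_Xᵀ Z̃` has orthonormal columns and `‖X - Z Lᵀ‖_F² = ‖C - Z̃ Lᵀ‖_F²`. -/
theorem stmt12 {N P K : ℕ} (hPN : P < N)
    (X : Matrix (Fin N) (Fin P) ℝ)
    (UX : Matrix (Fin N) (Fin P) ℝ) (VX : Matrix (Fin P) (Fin P) ℝ) (dX : Fin P → ℝ)
    (hUX : UX.transpose * UX = 1)
    (hVX : VX.transpose * VX = 1) (hVX' : VX * VX.transpose = 1)
    (hdX : ∀ i, 0 ≤ dX i)
    (hX : X = UX * Matrix.diagonal dX * VX.transpose)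
    (C : Matrix (Fin P) (Fin P) ℝ) (hC : C = VX * Matrix.diagonal dX * VX.transpose)
    (L : Matrix (Fin P) (Fin K) ℝ)
    (U' : Matrix (Fin P) (Fin K) ℝ) (V' : Matrix (Fin K) (Fin K) ℝ) (d' : Fin K → ℝ)
    (hU' : U'.transpose * U' = 1)
    (hV'1 : V'.transpose * V' = 1) (hV'2 : V' * V'.transpose = 1)
    (hd' : ∀ i, 0 ≤ d' i)
    (hSVD : C * L = U' * Matrix.diagonal d' * V'.transpose) :
    ((UX * VX.transpose * (U' * V'.transpose)).transpose
        * (UX * VX.transpose * (U' * V'.transpose)) = 1) ∧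
    frobSq (X - (UX * VX.transpose * (U' * V'.transpose)) * L.transpose)
      = frobSq (C - (U' * V'.transpose) * L.transpose) :=
  stmt12_general X UX VX dX hUX hVX hVX' hX C hC L U' V' hU' hV'2
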